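/- Let Ā be a subgroup of A, let J : A* → H⊗H be a dynamical twist for A, and let x : A* → H be a function with invertible values which has zero weight with respect to Ā and satisfies ε(x(λ)) = 1 for all λ. Define J^x : A* → H⊗H by J^x(λ) = Δ(x(λ)) · J(λ) · (x¹(λ − h^{(2)}))^{-1} · (x²(λ))^{-1}. If there exists a function J̄^x : Ā* → H⊗H such that J^x(λ) = J̄^x(λ̄) for all λ ∈ A* (where λ̄ is the restriction of λ to Ā), then J̄^x is a dynamical twist for Ā. -/

import Mathlib

open scoped TensorProduct

noncomputable section

variable {H : Type*} [Ring H] [HopfAlgebra ℂ H]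

/-- The character group `A* = Hom(A, ℂˣ)` of a subgroup `A ≤ Hˣ`, written additively. -/
abbrev DChar (A : Subgroup Hˣ) : Type _ := Additive (↥A →* ℂˣ)

/-- An element of a Hopf algebra is group-like if `Δ g = g ⊗ g` and `ε g = 1`. -/
def IsGroupLike (h : H) : Prop :=
  Coalgebra.comul (R := ℂ) h = h ⊗ₜ[ℂ] h ∧ Coalgebra.counit (R := ℂ) h = (1 : ℂ)

/-- The primitive idempotent `P_μ = |A|⁻¹ ∑_{a ∈ A} μ(a)⁻¹ a` of `ℂ[A] ⊆ H`. -/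
def dP (A : Subgroup Hˣ) [Fintype A] (μ : DChar A) : H :=
  (Fintype.card A : ℂ)⁻¹ • ∑ a : A, ((((Additive.toMul μ) a)⁻¹ : ℂˣ) : ℂ) • ((a : Hˣ) : H)

/-- A zero weight element of `H` (w.r.t. `A`): commutes with every `a ∈ A`. -/
def ZeroWeight₁ (A : Subgroup Hˣ) (v : H) : Prop :=
  ∀ a : A, v * ((a : Hˣ) : H) = ((a : Hˣ) : H) * v

/-- A zero weight element of `H ⊗ H` (w.r.t. `A`): commutes with every `a ⊗ a`, `a ∈ A`. -/
def ZeroWeight₂ (A : Subgroup Hˣ) (v : H ⊗[ℂ] H) : Prop :=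
  ∀ a : A, v * (((a : Hˣ) : H) ⊗ₜ[ℂ] ((a : Hˣ) : H))
    = (((a : Hˣ) : H) ⊗ₜ[ℂ] ((a : Hˣ) : H)) * v

/-- `J ↦ J^{12,3} = (Δ ⊗ id)(J)`. -/
def J12_3 : H ⊗[ℂ] H →ₐ[ℂ] (H ⊗[ℂ] H) ⊗[ℂ] H :=
  Algebra.TensorProduct.map (Bialgebra.comulAlgHom ℂ H) (AlgHom.id ℂ H)

/-- `J ↦ J^{1,23} = (id ⊗ Δ)(J)`, written in `(H ⊗ H) ⊗ H`. -/
def J1_23 : H ⊗[ℂ] H →ₐ[ℂ] (H ⊗[ℂ] H) ⊗[ℂ] H :=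
  ((Algebra.TensorProduct.assoc ℂ ℂ ℂ H H H).symm).toAlgHom.comp
    (Algebra.TensorProduct.map (AlgHom.id ℂ H) (Bialgebra.comulAlgHom ℂ H))

/-- `(ε ⊗ id) : H ⊗ H → H`. -/
def epsId : H ⊗[ℂ] H →ₐ[ℂ] H :=
  (Algebra.TensorProduct.lid ℂ H).toAlgHom.comp
    (Algebra.TensorProduct.map (Bialgebra.counitAlgHom ℂ H) (AlgHom.id ℂ H))

/-- `(id ⊗ ε) : H ⊗ H → H`. -/
def idEps : H ⊗[ℂ] H →ₐ[ℂ] H :=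
  (Algebra.TensorProduct.rid ℂ ℂ H).toAlgHom.comp
    (Algebra.TensorProduct.map (AlgHom.id ℂ H) (Bialgebra.counitAlgHom ℂ H))

/-- `x¹(λ - h⁽²⁾) = ∑_μ x(λ-μ) ⊗ P_μ`. -/
def x1shift (A : Subgroup Hˣ) [Fintype A] [Fintype (DChar A)]
    (x : DChar A → H) (lam : DChar A) : H ⊗[ℂ] H :=
  ∑ μ : DChar A, x (lam - μ) ⊗ₜ[ℂ] dP A μ

/-- A dynamical twist `J : A* → H ⊗ H`: a zero weight invertible-valued function satisfying
`J^{12,3}(λ) J^{12}(λ-h⁽³⁾) = J^{1,23}(λ) J^{23}(λ)` and `(ε⊗id)J = (id⊗ε)J = 1`. -/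
def IsDynamicalTwist (A : Subgroup Hˣ) [Fintype A] [Fintype (DChar A)]
    (J : DChar A → H ⊗[ℂ] H) : Prop :=
  (∀ lam, ZeroWeight₂ A (J lam)) ∧
  (∀ lam, IsUnit (J lam)) ∧
  (∀ lam : DChar A,
    J12_3 (J lam) * (∑ μ : DChar A, J (lam - μ) ⊗ₜ[ℂ] dP A μ)
      = J1_23 (J lam)
        * ((Algebra.TensorProduct.assoc ℂ ℂ ℂ H H H).symm ((1 : H) ⊗ₜ[ℂ] J lam))) ∧
  (∀ lam, epsId (J lam) = 1 ∧ idEps (J lam) = 1)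

/-- Restriction `λ ↦ λ̄` of a character of `A` to a subgroup `B ≤ A`. -/
def resChar {B A : Subgroup Hˣ} (hBA : B ≤ A) (lam : DChar A) : DChar B :=
  Additive.ofMul ((Additive.toMul lam).comp (Subgroup.inclusion hBA))

/-!
For a finite abelian group acting on an algebra through units, the idempotents
`P_μ = |A|⁻¹ ∑ₐ μ(a)⁻¹ a` are orthogonal, sum to `1`, and satisfy `P_μ z = δ_{μ,χ} z` whenever the
group acts on `z` by the character `χ`. For group-like elements the diagonal action `a ↦ a ⊗ a`
acts on `P_ν ⊗ P_ν'` by `ν + ν'`, whence `Δ P_μ = ∑_ν P_ν ⊗ P_{μ-ν}`; similarly `ε P_μ = δ_{μ,0}`.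
Hence `F ↦ F(λ - h)` is multiplicative and unital, and expanding `J^x` reduces its cocycle identity
to that of `J`: the factors coming from `x` cancel by coassociativity, because `J` has zero weight,
and because `x(λ)` commutes with `J^x(λ - h⁽³⁾)` in the third factor.

That commutation, and the passage from `A*` to `Ā*`, come from `P^Ā_κ P^A_μ = δ_{κ,μ̄} P^A_μ`: for a
function factoring through `λ ↦ λ̄` the shift over `A*` equals the shift over `Ā*`, whose idempotents
commute with `x(λ)` by zero weight. As every character of `Ā` extends to `A`, each identity for
`J^x` on `A*` gives the corresponding one for `J̄^x` on all of `Ā*`.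
-/

lemma map_ringInverse {M N F : Type*} [MonoidWithZero M] [MonoidWithZero N] [FunLike F M N]
    [MonoidHomClass F M N] (f : F) {a : M} (ha : IsUnit a) :
    f (Ring.inverse a) = Ring.inverse (f a) := by
  obtain ⟨u, rfl⟩ := ha
  have hf : ∀ v : Mˣ, f v = (Units.map (f : M →* N) v : N) := fun v => rfl
  rw [Ring.inverse_unit, hf, hf, Ring.inverse_unit, map_inv]

lemma Commute.ringInverse_right {M : Type*} [MonoidWithZero M] {a b : M} (h : Commute a b) :
    Commute a (Ring.inverse b) := by
  by_cases hb : IsUnit b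
  · obtain ⟨u, rfl⟩ := hb
    rw [Ring.inverse_unit]
    exact h.units_inv_right
  · rw [Ring.inverse_non_unit _ hb]
    exact Commute.zero_right a

lemma Commute.ringInverse_left {M : Type*} [MonoidWithZero M] {a b : M} (h : Commute a b) :
    Commute (Ring.inverse a) b :=
  h.symm.ringInverse_right.symm

lemma isUnit_one_tmul {R S : Type*} [Ring R] [Algebra ℂ R] [Ring S] [Algebra ℂ S] {y : S}
    (hy : IsUnit y) : IsUnit ((1 : R) ⊗ₜ[ℂ] y) :=
  hy.map (Algebra.TensorProduct.includeRight (R := ℂ) (A := R))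

section CharProj

variable {G : Type*} [Group G] [Fintype G] {S : Type*} [Ring S] [Algebra ℂ S]

lemma sum_toMul_apply (μ : Additive (G →* ℂˣ)) [Decidable (μ = 0)] :
    ∑ g, ((Additive.toMul μ g : ℂˣ) : ℂ) = if μ = 0 then (Fintype.card G : ℂ) else 0 := by
  classical
  have hμ : (Units.coeHom ℂ).comp (Additive.toMul μ) = 1 ↔ μ = 0 := by
    rw [← Additive.toMul.injective.eq_iff, toMul_zero, MonoidHom.ext_iff, MonoidHom.ext_iff]
    refine forall_congr' fun g => ?_
    simp only [MonoidHom.coe_comp, Function.comp_apply, Units.coeHom_apply,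
      MonoidHom.one_apply, Units.val_eq_one]
  refine (sum_hom_units ((Units.coeHom ℂ).comp (Additive.toMul μ))).trans ?_
  simp only [hμ]
  split_ifs <;> simp

open scoped IsMulCommutative in
lemma sum_dual_toMul_apply [IsMulCommutative G] [Fintype (Additive (G →* ℂˣ))] (g : G)
    [Decidable (g = 1)] :
    ∑ μ : Additive (G →* ℂˣ), ((Additive.toMul μ g : ℂˣ) : ℂ)
      = if g = 1 then (Fintype.card G : ℂ) else 0 := by
  classical
  have : NeZero ((Monoid.exponent G : ℂ)) :=
    ⟨Nat.cast_ne_zero.mpr Monoid.exponent_ne_zero_of_finite⟩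
  let : Fintype (G →* ℂˣ) := ‹Fintype (Additive (G →* ℂˣ))›
  have hcard : Fintype.card (G →* ℂˣ) = Fintype.card G := by
    simpa only [Nat.card_eq_fintype_card] using
      CommGroup.card_monoidHom_of_hasEnoughRootsOfUnity G ℂ
  have hg : (Units.coeHom ℂ).comp (MonoidHom.eval g) = 1 ↔ g = 1 := by
    rw [← CommGroup.forall_apply_eq_apply_iff G (M := ℂ), MonoidHom.ext_iff]
    refine forall_congr' fun χ => ?_
    simp only [MonoidHom.coe_comp, Function.comp_apply, Units.coeHom_apply,
      MonoidHom.one_apply, map_one, MonoidHom.eval_apply_apply, Units.val_eq_one]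
  refine (sum_hom_units ((Units.coeHom ℂ).comp (MonoidHom.eval g))).trans ?_
  simp only [hg, hcard]
  split_ifs <;> simp

/-- `P_μ` for an arbitrary action `ρ`; `dP A μ` is `charProj A.subtype μ` by definition. -/
def charProj (ρ : G →* Sˣ) (μ : Additive (G →* ℂˣ)) : S :=
  (Fintype.card G : ℂ)⁻¹ • ∑ g, (((Additive.toMul μ g)⁻¹ : ℂˣ) : ℂ) • (ρ g : S)

lemma charProj_mul_of_forall_mul_eq_smul (ρ : G →* Sˣ) (χ : Additive (G →* ℂˣ)) {z : S}
    (hz : ∀ g, (ρ g : S) * z = ((Additive.toMul χ g : ℂˣ) : ℂ) • z) (μ : Additive (G →* ℂˣ))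
    [Decidable (μ = χ)] :
    charProj ρ μ * z = if μ = χ then z else 0 := by
  classical
  have key : charProj ρ μ * z
      = ((Fintype.card G : ℂ)⁻¹ * ∑ g, ((Additive.toMul (χ - μ) g : ℂˣ) : ℂ)) • z := by
    rw [charProj, smul_mul_assoc, Finset.sum_mul, mul_smul, Finset.sum_smul]
    congr 1
    refine Finset.sum_congr rfl fun g _ => ?_
    rw [smul_mul_assoc, hz, smul_smul]
    simp [div_eq_mul_inv, mul_comm]
  rw [key, sum_toMul_apply]
  by_cases h : μ = χ
  · rw [if_pos (sub_eq_zero.mpr h.symm), if_pos h,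
      inv_mul_cancel₀ (by exact_mod_cast Fintype.card_ne_zero), one_smul]
  · rw [if_neg (fun h' => h (sub_eq_zero.mp h').symm), if_neg h, mul_zero, zero_smul]

lemma units_mul_charProj (ρ : G →* Sˣ) (μ : Additive (G →* ℂˣ)) (g : G) :
    (ρ g : S) * charProj ρ μ = ((Additive.toMul μ g : ℂˣ) : ℂ) • charProj ρ μ := by
  have hshift : ∑ h, (((Additive.toMul μ h)⁻¹ : ℂˣ) : ℂ) • ((ρ g : S) * ρ h)
      = ∑ k, ((Additive.toMul μ g * (Additive.toMul μ k)⁻¹ : ℂˣ) : ℂ) • (ρ k : S) :=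
    Fintype.sum_equiv (Equiv.mulLeft g) _ _ fun h => by
      simp only [Equiv.coe_mulLeft, map_mul, mul_inv_rev, Units.val_mul]
      rw [mul_left_comm, Units.mul_inv, mul_one]
  simp only [charProj, mul_smul_comm, Finset.mul_sum, hshift, Units.val_mul, ← smul_smul,
    ← Finset.smul_sum, smul_comm _ ((Additive.toMul μ g : ℂˣ) : ℂ)]

lemma charProj_mul_charProj (ρ : G →* Sˣ) (μ ν : Additive (G →* ℂˣ)) [Decidable (μ = ν)] :
    charProj ρ μ * charProj ρ ν = if μ = ν then charProj ρ ν else 0 :=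
  charProj_mul_of_forall_mul_eq_smul ρ ν (units_mul_charProj ρ ν) μ

lemma sum_charProj [IsMulCommutative G] [Fintype (Additive (G →* ℂˣ))] (ρ : G →* Sˣ) :
    ∑ μ, charProj ρ μ = 1 := by
  classical
  have hsum : ∀ g : G, ∑ μ : Additive (G →* ℂˣ), (((Additive.toMul μ g)⁻¹ : ℂˣ) : ℂ)
      = if g = 1 then (Fintype.card G : ℂ) else 0 := fun g => by
    simp only [← map_inv, sum_dual_toMul_apply, inv_eq_one]
  simp only [charProj, ← Finset.smul_sum]
  rw [Finset.sum_comm]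
  simp only [← Finset.sum_smul, hsum, ite_smul, zero_smul, Finset.sum_ite_eq', Finset.mem_univ,
    if_true, map_one, Units.val_one, smul_smul]
  rw [inv_mul_cancel₀ (by exact_mod_cast Fintype.card_ne_zero), one_smul]

lemma Commute.charProj_right {ρ : G →* Sˣ} {z : S} (hz : ∀ g, Commute z (ρ g))
    (μ : Additive (G →* ℂˣ)) : Commute z (charProj ρ μ) := by
  unfold charProj
  exact (Commute.sum_right _ _ _ fun g _ => (hz g).smul_right _).smul_right _

lemma map_charProj {T : Type*} [Ring T] [Algebra ℂ T] (f : S →ₐ[ℂ] T) (ρ : G →* Sˣ)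
    (μ : Additive (G →* ℂˣ)) :
    f (charProj ρ μ) = charProj ((Units.map (f : S →* T)).comp ρ) μ := by
  simp only [charProj, map_smul, map_sum]
  rfl

end CharProj

section CharShift

variable {G : Type*} [Group G] [Fintype G] [Fintype (Additive (G →* ℂˣ))]
  {R S : Type*} [Ring R] [Algebra ℂ R] [Ring S] [Algebra ℂ S]

/-- `F(λ - h)`, with `h` acting in the last factor through `ρ`, is
`charShift ρ (fun μ => F (λ - μ))`. -/
def charShift (ρ : G →* Sˣ) (f : Additive (G →* ℂˣ) → R) : R ⊗[ℂ] S :=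
  ∑ μ, f μ ⊗ₜ charProj ρ μ

lemma charShift_mul (ρ : G →* Sˣ) (f g : Additive (G →* ℂˣ) → R) :
    charShift ρ (fun μ => f μ * g μ) = charShift ρ f * charShift ρ g := by
  classical
  simp only [charShift, Finset.sum_mul_sum, Algebra.TensorProduct.tmul_mul_tmul,
    charProj_mul_charProj, TensorProduct.tmul_ite, Finset.sum_ite_eq, Finset.mem_univ, if_true]

lemma charShift_one [IsMulCommutative G] (ρ : G →* Sˣ) :
    charShift ρ (fun _ => (1 : R)) = 1 := by
  rw [charShift, ← TensorProduct.tmul_sum, sum_charProj, Algebra.TensorProduct.one_def]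

lemma isUnit_charShift [IsMulCommutative G] (ρ : G →* Sˣ) {f : Additive (G →* ℂˣ) → R}
    (hf : ∀ μ, IsUnit (f μ)) : IsUnit (charShift ρ f) := by
  refine isUnit_iff_exists.mpr ⟨charShift ρ fun μ => Ring.inverse (f μ), ?_, ?_⟩
  · rw [← charShift_mul, ← charShift_one ρ]
    congr with μ
    exact Ring.mul_inverse_cancel _ (hf μ)
  · rw [← charShift_mul, ← charShift_one ρ]
    congr with μ
    exact Ring.inverse_mul_cancel _ (hf μ)

lemma charShift_ringInverse [IsMulCommutative G] (ρ : G →* Sˣ) {f : Additive (G →* ℂˣ) → R}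
    (hf : ∀ μ, IsUnit (f μ)) :
    charShift ρ (fun μ => Ring.inverse (f μ)) = Ring.inverse (charShift ρ f) := by
  rw [← one_mul (Ring.inverse _), Ring.eq_mul_inverse_iff_mul_eq _ _ _ (isUnit_charShift ρ hf),
    ← charShift_mul, ← charShift_one ρ]
  congr with μ
  exact Ring.inverse_mul_cancel _ (hf μ)

lemma charShift_comp [IsMulCommutative G] {K : Type*} [Group K] [Fintype K]
    [Fintype (Additive (K →* ℂˣ))] (ρ : G →* Sˣ) (ι : K →* G) (f : Additive (K →* ℂˣ) → R) :
    charShift (ρ.comp ι) f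
      = charShift ρ (fun μ => f (Additive.ofMul ((Additive.toMul μ).comp ι))) := by
  classical
  have hproj : ∀ κ μ, charProj (ρ.comp ι) κ * charProj ρ μ
      = if κ = Additive.ofMul ((Additive.toMul μ).comp ι) then charProj ρ μ else 0 :=
    fun κ μ => charProj_mul_of_forall_mul_eq_smul _ _ (fun k => units_mul_charProj ρ μ (ι k)) κ
  calc charShift (ρ.comp ι) f
      = ∑ κ, ∑ μ, f κ ⊗ₜ (charProj (ρ.comp ι) κ * charProj ρ μ) := by
        simp only [← TensorProduct.tmul_sum, ← Finset.mul_sum, sum_charProj, mul_one, charShift]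
    _ = _ := by
        rw [Finset.sum_comm]
        simp only [hproj, TensorProduct.tmul_ite, Finset.sum_ite_eq', Finset.mem_univ, if_true,
          charShift]

lemma Commute.one_tmul_charShift {ρ : G →* Sˣ} {z : S} (hz : ∀ g, Commute z (ρ g))
    (f : Additive (G →* ℂˣ) → R) : Commute ((1 : R) ⊗ₜ[ℂ] z) (charShift ρ f) :=
  Commute.sum_right _ _ _ fun μ _ => (Commute.one_left _).tmul (Commute.charProj_right hz μ)

end CharShift

section Restriction

variable {M : Type*} [Ring M] {A B : Subgroup Mˣ} (hBA : B ≤ A)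

open scoped IsMulCommutative in
lemma resChar_surjective [Finite A] [IsMulCommutative A] :
    Function.Surjective (resChar hBA) := by
  have : NeZero (Monoid.exponent A : ℂ) :=
    ⟨Nat.cast_ne_zero.mpr Monoid.exponent_ne_zero_of_finite⟩
  intro κ
  obtain ⟨φ, hφ⟩ := MonoidHom.domRestrict_surjective (M := ℂ) (B.subgroupOf A)
    ((Additive.toMul κ).comp (Subgroup.subgroupOfEquivOfLe hBA).toMonoidHom)
  exact ⟨Additive.ofMul φ, congrArg Additive.ofMul
    (MonoidHom.ext fun b => DFunLike.congr_fun hφ ⟨Subgroup.inclusion hBA b, b.2⟩)⟩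

lemma charShift_resChar [Algebra ℂ M] [Fintype A] [Fintype B] [Fintype (DChar A)]
    [Fintype (DChar B)] [IsMulCommutative A] {R : Type*} [Ring R] [Algebra ℂ R]
    (f : DChar B → R) :
    charShift B.subtype f = charShift A.subtype (fun μ => f (resChar hBA μ)) :=
  charShift_comp A.subtype (Subgroup.inclusion hBA) f

end Restriction

section HopfAlgebra

def J23 : H ⊗[ℂ] H →ₐ[ℂ] (H ⊗[ℂ] H) ⊗[ℂ] H :=
  (Algebra.TensorProduct.assoc ℂ ℂ ℂ H H H).symm.toAlgHom.comp
    Algebra.TensorProduct.includeRight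

lemma J12_3_eq_rTensor (z : H ⊗[ℂ] H) :
    J12_3 z = (Coalgebra.comul (R := ℂ) (A := H)).rTensor H z :=
  LinearMap.congr_fun (TensorProduct.ext' (g := (J12_3 (H := H)).toLinearMap) fun _ _ => rfl) z

lemma J1_23_eq_lTensor (z : H ⊗[ℂ] H) :
    J1_23 z
      = (TensorProduct.assoc ℂ H H H).symm ((Coalgebra.comul (R := ℂ) (A := H)).lTensor H z) :=
  LinearMap.congr_fun (TensorProduct.ext' (g := (J1_23 (H := H)).toLinearMap)
    (h := (TensorProduct.assoc ℂ H H H).symm.toLinearMap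
      ∘ₗ (Coalgebra.comul (R := ℂ) (A := H)).lTensor H) fun _ _ => rfl) z

lemma J12_3_comul (y : H) :
    J12_3 (Bialgebra.comulAlgHom ℂ H y) = J1_23 (Bialgebra.comulAlgHom ℂ H y) := by
  rw [J12_3_eq_rTensor, J1_23_eq_lTensor, Bialgebra.comulAlgHom_apply,
    Coalgebra.coassoc_symm_apply]

lemma epsId_comul (y : H) : epsId (Bialgebra.comulAlgHom ℂ H y) = y := by
  have h : ∀ z : H ⊗[ℂ] H, epsId z
      = TensorProduct.lid ℂ H ((Coalgebra.counit (R := ℂ) (A := H)).rTensor H z) :=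
    LinearMap.congr_fun (TensorProduct.ext' (g := (epsId (H := H)).toLinearMap)
      (h := (TensorProduct.lid ℂ H).toLinearMap ∘ₗ (Coalgebra.counit (R := ℂ) (A := H)).rTensor H)
      fun _ _ => rfl)
  rw [h, Bialgebra.comulAlgHom_apply, Coalgebra.rTensor_counit_comul, TensorProduct.lid_tmul,
    one_smul]

lemma idEps_comul (y : H) : idEps (Bialgebra.comulAlgHom ℂ H y) = y := by
  have h : ∀ z : H ⊗[ℂ] H, idEps z
      = TensorProduct.rid ℂ H ((Coalgebra.counit (R := ℂ) (A := H)).lTensor H z) :=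
    LinearMap.congr_fun (TensorProduct.ext' (g := (idEps (H := H)).toLinearMap)
      (h := (TensorProduct.rid ℂ H).toLinearMap ∘ₗ (Coalgebra.counit (R := ℂ) (A := H)).lTensor H)
      fun _ _ => rfl)
  rw [h, Bialgebra.comulAlgHom_apply, Coalgebra.lTensor_counit_comul, TensorProduct.rid_tmul,
    one_smul]

lemma J12_3_one_tmul (y : H) : J12_3 ((1 : H) ⊗ₜ[ℂ] y) = (1 : H ⊗[ℂ] H) ⊗ₜ[ℂ] y := by
  simp [J12_3]

lemma J1_23_one_tmul (y : H) : J1_23 ((1 : H) ⊗ₜ[ℂ] y) = J23 (Bialgebra.comulAlgHom ℂ H y) :=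
  rfl

lemma J23_one_tmul (y : H) : J23 ((1 : H) ⊗ₜ[ℂ] y) = (1 : H ⊗[ℂ] H) ⊗ₜ[ℂ] y := by
  simp [J23, Algebra.TensorProduct.one_def]

variable {G : Type*} [Group G] [Fintype G]

lemma counit_charProj (ρ : G →* Hˣ) (hρ : ∀ g, IsGroupLike (ρ g : H))
    (μ : Additive (G →* ℂˣ)) [Decidable (μ = 0)] :
    Bialgebra.counitAlgHom ℂ H (charProj ρ μ) = if μ = 0 then 1 else 0 := by
  rw [map_charProj, ← mul_one (charProj _ μ)]
  refine charProj_mul_of_forall_mul_eq_smul _ 0 (fun g => ?_) μ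
  simp [(hρ g).2]

lemma comul_charProj [IsMulCommutative G] [Fintype (Additive (G →* ℂˣ))] (ρ : G →* Hˣ)
    (hρ : ∀ g, IsGroupLike (ρ g : H)) (μ : Additive (G →* ℂˣ)) :
    Bialgebra.comulAlgHom ℂ H (charProj ρ μ) = ∑ ν, charProj ρ ν ⊗ₜ[ℂ] charProj ρ (μ - ν) := by
  classical
  -- `Δ P_μ` is `P_μ` for the diagonal action, under which `P_ν ⊗ P_ν'` has weight `ν + ν'`
  have hdiag : ∀ ν ν', charProj ((Units.map (Bialgebra.comulAlgHom ℂ H : H →* H ⊗[ℂ] H)).comp ρ) μ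
      * (charProj ρ ν ⊗ₜ[ℂ] charProj ρ ν')
        = if μ = ν + ν' then charProj ρ ν ⊗ₜ[ℂ] charProj ρ ν' else 0 :=
    fun ν ν' => charProj_mul_of_forall_mul_eq_smul _ (ν + ν') (fun g => by
      simp only [MonoidHom.coe_comp, Function.comp_apply, Units.coe_map, MonoidHom.coe_coe,
        Bialgebra.comulAlgHom_apply, (hρ g).1, Algebra.TensorProduct.tmul_mul_tmul,
        units_mul_charProj, toMul_add, MonoidHom.mul_apply, Units.val_mul]
      rw [TensorProduct.smul_tmul, smul_smul, TensorProduct.tmul_smul]) μ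
  calc Bialgebra.comulAlgHom ℂ H (charProj ρ μ)
      = Bialgebra.comulAlgHom ℂ H (charProj ρ μ)
          * ((∑ ν, charProj ρ ν) ⊗ₜ[ℂ] ∑ ν', charProj ρ ν') := by
        rw [sum_charProj, ← Algebra.TensorProduct.one_def, mul_one]
    _ = ∑ ν, ∑ ν', if μ = ν + ν' then charProj ρ ν ⊗ₜ[ℂ] charProj ρ ν' else 0 := by
        simp only [TensorProduct.sum_tmul, TensorProduct.tmul_sum, Finset.mul_sum, map_charProj,
          hdiag]
        exact Finset.sum_comm
    _ = _ := by
        refine Finset.sum_congr rfl fun ν _ => ?_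
        have hμ : ∀ ν', μ = ν + ν' ↔ ν' = μ - ν := fun ν' => by
          constructor <;> rintro rfl <;> abel
        simp only [hμ, Finset.sum_ite_eq', Finset.mem_univ, if_true]

variable [Fintype (Additive (G →* ℂˣ))]

lemma J12_3_charShift (ρ : G →* Hˣ) (f : Additive (G →* ℂˣ) → H) :
    J12_3 (charShift ρ f) = charShift ρ (fun μ => Bialgebra.comulAlgHom ℂ H (f μ)) := by
  simp only [charShift, map_sum]
  rfl

lemma J23_charShift (ρ : G →* Hˣ) (f : Additive (G →* ℂˣ) → H) :
    J23 (charShift ρ f) = charShift ρ (fun μ => (1 : H) ⊗ₜ[ℂ] f μ) := by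
  simp only [charShift, map_sum]
  rfl

lemma J1_23_charShift [IsMulCommutative G] (ρ : G →* Hˣ) (hρ : ∀ g, IsGroupLike (ρ g : H))
    (f : Additive (G →* ℂˣ) → H) :
    J1_23 (charShift ρ f) = charShift ρ (fun κ => charShift ρ (fun ν => f (κ + ν))) := by
  have hterm : ∀ μ, J1_23 (f μ ⊗ₜ[ℂ] charProj ρ μ)
      = ∑ ν, (f μ ⊗ₜ[ℂ] charProj ρ ν) ⊗ₜ[ℂ] charProj ρ (μ - ν) := fun μ => by
    rw [J1_23_eq_lTensor, LinearMap.lTensor_tmul, ← Bialgebra.comulAlgHom_apply,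
      comul_charProj ρ hρ, TensorProduct.tmul_sum, map_sum]
    rfl
  calc J1_23 (charShift ρ f)
      = ∑ ν, ∑ μ, (f μ ⊗ₜ[ℂ] charProj ρ ν) ⊗ₜ[ℂ] charProj ρ (μ - ν) := by
        rw [charShift, map_sum, Finset.sum_comm]
        exact Finset.sum_congr rfl fun μ _ => hterm μ
    _ = ∑ ν, ∑ κ, (f (κ + ν) ⊗ₜ[ℂ] charProj ρ ν) ⊗ₜ[ℂ] charProj ρ κ :=
        Finset.sum_congr rfl fun ν _ =>
          (Fintype.sum_equiv (Equiv.addRight ν) _ _ fun κ => by simp).symm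
    _ = _ := by
        rw [Finset.sum_comm]
        simp only [charShift, TensorProduct.sum_tmul]

lemma epsId_charShift [IsMulCommutative G] (ρ : G →* Hˣ) {f : Additive (G →* ℂˣ) → H}
    (hf : ∀ μ, Bialgebra.counitAlgHom ℂ H (f μ) = 1) : epsId (charShift ρ f) = 1 := by
  have hterm : ∀ μ, epsId (f μ ⊗ₜ[ℂ] charProj ρ μ) = charProj ρ μ := fun μ => by
    change Bialgebra.counitAlgHom ℂ H (f μ) • charProj ρ μ = _
    rw [hf, one_smul]
  simp only [charShift, map_sum, hterm, sum_charProj]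

lemma idEps_charShift (ρ : G →* Hˣ) (hρ : ∀ g, IsGroupLike (ρ g : H))
    (f : Additive (G →* ℂˣ) → H) : idEps (charShift ρ f) = f 0 := by
  classical
  have hterm : ∀ μ, idEps (f μ ⊗ₜ[ℂ] charProj ρ μ) = if μ = 0 then f μ else 0 := fun μ => by
    change Bialgebra.counitAlgHom ℂ H (charProj ρ μ) • f μ = _
    rw [counit_charProj ρ hρ, ite_smul, one_smul, zero_smul]
  simp only [charShift, map_sum, hterm, Finset.sum_ite_eq', Finset.mem_univ, if_true]

end HopfAlgebra

section IRFVertex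

variable (A : Subgroup Hˣ) [Fintype A] [Fintype (DChar A)]

def irfVertexTransform (J : DChar A → H ⊗[ℂ] H) (x : DChar A → H) (lam : DChar A) :
    H ⊗[ℂ] H :=
  Bialgebra.comulAlgHom ℂ H (x lam) * J lam * Ring.inverse (x1shift A x lam)
    * Ring.inverse ((1 : H) ⊗ₜ[ℂ] x lam)

variable {A}

lemma x1shift_eq_charShift (x : DChar A → H) (lam : DChar A) :
    x1shift A x lam = charShift A.subtype (fun μ => x (lam - μ)) := rfl

lemma commute_J23_J1_23_x1shift (hgl : ∀ a : A, IsGroupLike ((a : Hˣ) : H))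
    {j : H ⊗[ℂ] H} (hj : ZeroWeight₂ A j) (x : DChar A → H) (lam : DChar A) :
    Commute (J23 j) (J1_23 (x1shift A x lam)) := by
  rw [x1shift_eq_charShift, charShift, map_sum]
  refine Commute.sum_right _ _ _ fun μ _ =>
    Commute.map ?_ (Algebra.TensorProduct.assoc ℂ ℂ ℂ H H H).symm
  refine (Commute.one_left _).tmul ?_
  change Commute j (Bialgebra.comulAlgHom ℂ H (charProj A.subtype μ))
  rw [map_charProj]
  refine Commute.charProj_right (fun a => ?_) μ
  change Commute j (Bialgebra.comulAlgHom ℂ H ((a : Hˣ) : H))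
  rw [Bialgebra.comulAlgHom_apply, (hgl a).1]
  exact hj a

variable [IsMulCommutative A] {J : DChar A → H ⊗[ℂ] H} {x : DChar A → H}

lemma isUnit_x1shift (hxu : ∀ lam, IsUnit (x lam)) (lam : DChar A) :
    IsUnit (x1shift A x lam) :=
  isUnit_charShift A.subtype fun μ => hxu (lam - μ)

lemma J1_23_x1shift (hgl : ∀ a : A, IsGroupLike ((a : Hˣ) : H)) (x : DChar A → H)
    (lam : DChar A) :
    J1_23 (x1shift A x lam) = charShift A.subtype (fun κ => x1shift A x (lam - κ)) := by
  rw [x1shift_eq_charShift, J1_23_charShift A.subtype hgl]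
  exact congrArg (charShift A.subtype) (funext fun κ => congrArg (charShift A.subtype)
    (funext fun ν => congrArg x (sub_add_eq_sub_sub lam κ ν)))

lemma isUnit_irfVertexTransform (hJu : ∀ lam, IsUnit (J lam)) (hxu : ∀ lam, IsUnit (x lam))
    (lam : DChar A) : IsUnit (irfVertexTransform A J x lam) :=
  ((((hxu lam).map (Bialgebra.comulAlgHom ℂ H)).mul (hJu lam)).mul
    (isUnit_x1shift hxu lam).ringInverse).mul (isUnit_one_tmul (hxu lam)).ringInverse

lemma epsId_irfVertexTransform (hJε : ∀ lam, epsId (J lam) = 1) (hxu : ∀ lam, IsUnit (x lam))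
    (hxε : ∀ lam, Bialgebra.counitAlgHom ℂ H (x lam) = 1) (lam : DChar A) :
    epsId (irfVertexTransform A J x lam) = 1 := by
  have hS : epsId (x1shift A x lam) = 1 := epsId_charShift A.subtype fun μ => hxε (lam - μ)
  have hX : epsId ((1 : H) ⊗ₜ[ℂ] x lam) = x lam := by
    change Bialgebra.counitAlgHom ℂ H 1 • x lam = _
    rw [map_one, one_smul]
  rw [irfVertexTransform, map_mul, map_mul, map_mul, map_ringInverse _ (isUnit_x1shift hxu lam),
    map_ringInverse _ (isUnit_one_tmul (hxu lam)), epsId_comul, hJε, hS, hX, Ring.inverse_one,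
    mul_one, mul_one, Ring.mul_inverse_cancel _ (hxu lam)]

lemma idEps_irfVertexTransform (hgl : ∀ a : A, IsGroupLike ((a : Hˣ) : H))
    (hJε : ∀ lam, idEps (J lam) = 1) (hxu : ∀ lam, IsUnit (x lam))
    (hxε : ∀ lam, Bialgebra.counitAlgHom ℂ H (x lam) = 1) (lam : DChar A) :
    idEps (irfVertexTransform A J x lam) = 1 := by
  have hS : idEps (x1shift A x lam) = x lam := by
    rw [x1shift_eq_charShift, idEps_charShift A.subtype hgl]
    exact congrArg x (sub_zero lam)
  have hX : idEps ((1 : H) ⊗ₜ[ℂ] x lam) = 1 := by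
    change Bialgebra.counitAlgHom ℂ H (x lam) • (1 : H) = _
    rw [hxε, one_smul]
  rw [irfVertexTransform, map_mul, map_mul, map_mul, map_ringInverse _ (isUnit_x1shift hxu lam),
    map_ringInverse _ (isUnit_one_tmul (hxu lam)), idEps_comul, hJε, hS, hX, Ring.inverse_one,
    mul_one, mul_one, Ring.mul_inverse_cancel _ (hxu lam)]

open scoped IsMulCommutative in
lemma zeroWeight₂_irfVertexTransform {B : Subgroup Hˣ} (hBA : B ≤ A)
    (hgl : ∀ a : A, IsGroupLike ((a : Hˣ) : H)) (hJw : ∀ lam, ZeroWeight₂ A (J lam))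
    (hxw : ∀ lam, ZeroWeight₁ B (x lam)) (lam : DChar A) :
    ZeroWeight₂ B (irfVertexTransform A J x lam) := by
  intro b
  let a : A := Subgroup.inclusion hBA b
  have hb : ∀ a' : A, Commute ((b : Hˣ) : H) ((a' : Hˣ) : H) := fun a' =>
    congrArg (fun u : Hˣ => (u : H)) (congrArg Subtype.val (mul_comm a a'))
  have hΔb : Bialgebra.comulAlgHom ℂ H ((b : Hˣ) : H) = ((b : Hˣ) : H) ⊗ₜ[ℂ] ((b : Hˣ) : H) :=
    (hgl a).1
  have hΔ : Commute (Bialgebra.comulAlgHom ℂ H (x lam)) (((b : Hˣ) : H) ⊗ₜ[ℂ] ((b : Hˣ) : H)) := by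
    rw [← hΔb]
    exact Commute.map (hxw lam b) _
  have hS : Commute (x1shift A x lam) (((b : Hˣ) : H) ⊗ₜ[ℂ] ((b : Hˣ) : H)) :=
    Commute.sum_left _ _ _ fun μ _ =>
      Commute.tmul (hxw (lam - μ) b) (Commute.charProj_right (ρ := A.subtype) hb μ).symm
  have hX : Commute ((1 : H) ⊗ₜ[ℂ] x lam) (((b : Hˣ) : H) ⊗ₜ[ℂ] ((b : Hˣ) : H)) :=
    (Commute.one_left _).tmul (hxw lam b : Commute _ _)
  exact ((hΔ.mul_left (hJw lam a)).mul_left hS.ringInverse_left).mul_left hX.ringInverse_left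

lemma charShift_irfVertexTransform (hgl : ∀ a : A, IsGroupLike ((a : Hˣ) : H))
    (hxu : ∀ lam, IsUnit (x lam)) (lam : DChar A) :
    charShift A.subtype (fun μ => irfVertexTransform A J x (lam - μ))
      = J12_3 (x1shift A x lam) * charShift A.subtype (fun μ => J (lam - μ))
        * Ring.inverse (J1_23 (x1shift A x lam)) * Ring.inverse (J23 (x1shift A x lam)) := by
  simp only [irfVertexTransform]
  rw [charShift_mul, charShift_mul, charShift_mul,
    charShift_ringInverse _ fun μ => isUnit_x1shift hxu (lam - μ),
    charShift_ringInverse _ fun μ => isUnit_one_tmul (hxu (lam - μ)),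
    ← J12_3_charShift, ← J23_charShift, ← x1shift_eq_charShift, ← J1_23_x1shift hgl]

lemma J12_3_irfVertexTransform (hxu : ∀ lam, IsUnit (x lam)) (lam : DChar A) :
    J12_3 (irfVertexTransform A J x lam)
      = J12_3 (Bialgebra.comulAlgHom ℂ H (x lam)) * J12_3 (J lam)
        * Ring.inverse (J12_3 (x1shift A x lam)) * Ring.inverse ((1 : H ⊗[ℂ] H) ⊗ₜ[ℂ] x lam) := by
  rw [irfVertexTransform, map_mul, map_mul, map_mul, map_ringInverse _ (isUnit_x1shift hxu lam),
    map_ringInverse _ (isUnit_one_tmul (hxu lam)), J12_3_one_tmul]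

lemma J1_23_mul_J23_irfVertexTransform (hxu : ∀ lam, IsUnit (x lam)) (lam : DChar A) :
    J1_23 (irfVertexTransform A J x lam) * J23 (irfVertexTransform A J x lam)
      = J12_3 (Bialgebra.comulAlgHom ℂ H (x lam)) * J1_23 (J lam)
        * Ring.inverse (J1_23 (x1shift A x lam)) * J23 (J lam)
        * Ring.inverse (J23 (x1shift A x lam)) * Ring.inverse ((1 : H ⊗[ℂ] H) ⊗ₜ[ℂ] x lam) := by
  have hSu := isUnit_x1shift hxu lam
  have hXu : IsUnit ((1 : H) ⊗ₜ[ℂ] x lam) := isUnit_one_tmul (hxu lam)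
  rw [irfVertexTransform, map_mul, map_mul, map_mul, map_mul, map_mul, map_mul,
    map_ringInverse _ hSu, map_ringInverse _ hXu, map_ringInverse _ hSu, map_ringInverse _ hXu,
    J1_23_one_tmul, J23_one_tmul, ← J12_3_comul]
  simp only [mul_assoc]
  rw [Ring.inverse_mul_cancel_left _ _ (((hxu lam).map (Bialgebra.comulAlgHom ℂ H)).map J23)]

lemma irfVertexTransform_cocycle (hgl : ∀ a : A, IsGroupLike ((a : Hˣ) : H))
    (hJw : ∀ lam, ZeroWeight₂ A (J lam))
    (hJ : ∀ lam, J12_3 (J lam) * charShift A.subtype (fun μ => J (lam - μ))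
      = J1_23 (J lam) * J23 (J lam))
    (hxu : ∀ lam, IsUnit (x lam)) (lam : DChar A)
    (hx : Commute ((1 : H ⊗[ℂ] H) ⊗ₜ[ℂ] x lam)
      (charShift A.subtype fun μ => irfVertexTransform A J x (lam - μ))) :
    J12_3 (irfVertexTransform A J x lam)
        * charShift A.subtype (fun μ => irfVertexTransform A J x (lam - μ))
      = J1_23 (irfVertexTransform A J x lam) * J23 (irfVertexTransform A J x lam) := by
  have hJl := hJ lam
  have hS₁ := (isUnit_x1shift hxu lam).map J12_3
  have hcomm := (commute_J23_J1_23_x1shift hgl (hJw lam) x lam).ringInverse_right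
  rw [charShift_irfVertexTransform hgl hxu] at hx ⊢
  rw [J12_3_irfVertexTransform hxu, J1_23_mul_J23_irfVertexTransform hxu]
  set D := J12_3 (Bialgebra.comulAlgHom ℂ H (x lam))
  set S₁ := J12_3 (x1shift A x lam)
  set S₂ := J1_23 (x1shift A x lam)
  set S₃ := J23 (x1shift A x lam)
  set X := (1 : H ⊗[ℂ] H) ⊗ₜ[ℂ] x lam
  set Jsh := charShift A.subtype (fun μ => J (lam - μ))
  calc D * J12_3 (J lam) * Ring.inverse S₁ * Ring.inverse X
        * (S₁ * Jsh * Ring.inverse S₂ * Ring.inverse S₃)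
      = D * J12_3 (J lam) * (Ring.inverse S₁ * S₁) * Jsh * Ring.inverse S₂ * Ring.inverse S₃
          * Ring.inverse X := by
        rw [mul_assoc _ (Ring.inverse X), hx.ringInverse_left.eq]
        simp only [mul_assoc]
    _ = D * (J12_3 (J lam) * Jsh) * Ring.inverse S₂ * Ring.inverse S₃ * Ring.inverse X := by
        rw [Ring.inverse_mul_cancel _ hS₁, mul_one]
        simp only [mul_assoc]
    _ = D * J1_23 (J lam) * (J23 (J lam) * Ring.inverse S₂) * Ring.inverse S₃
          * Ring.inverse X := by
        rw [hJl]
        simp only [mul_assoc]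
    _ = D * J1_23 (J lam) * Ring.inverse S₂ * J23 (J lam) * Ring.inverse S₃ * Ring.inverse X := by
        rw [hcomm.eq]
        simp only [mul_assoc]

end IRFVertex

/-- **Proposition (IRF-vertex transformations).**
Let `Ā ≤ A`, let `J : A* → H ⊗ H` be a dynamical twist for `A`, and let `x : A* → H` have
invertible values, zero weight w.r.t. `Ā`, and `ε(x(λ)) = 1`.  If
`J^x(λ) = Δ(x(λ)) J(λ) (x¹(λ-h⁽²⁾))⁻¹ (x²(λ))⁻¹` factors through the restriction map
`A* → Ā*`, i.e. `J^x(λ) = J̄^x(λ̄)` for some `J̄^x : Ā* → H ⊗ H`, then `J̄^x` is a dynamical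
twist for `Ā`. -/
theorem IRFvertex_transform_isDynamicalTwist
    {H : Type*} [Ring H] [HopfAlgebra ℂ H]
    (A B : Subgroup Hˣ) [Fintype A] [Fintype B]
    [Fintype (DChar A)] [Fintype (DChar B)]
    (hBA : B ≤ A)
    (hgl : ∀ a : A, IsGroupLike ((a : Hˣ) : H))
    (hab : ∀ a b : A, a * b = b * a)
    (J : DChar A → H ⊗[ℂ] H)
    (hJ : IsDynamicalTwist A J)
    (x : DChar A → H)
    (hxu : ∀ lam, IsUnit (x lam))
    (hxw : ∀ lam, ZeroWeight₁ B (x lam))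
    (hxe : ∀ lam, Bialgebra.counitAlgHom ℂ H (x lam) = 1)
    (Jbarx : DChar B → H ⊗[ℂ] H)
    (hJx : ∀ lam : DChar A,
      Bialgebra.comulAlgHom ℂ H (x lam) * J lam
        * Ring.inverse (x1shift A x lam)
        * Ring.inverse ((1 : H) ⊗ₜ[ℂ] x lam)
          = Jbarx (resChar hBA lam)) :
    IsDynamicalTwist B Jbarx := by
  have : IsMulCommutative A := ⟨⟨hab⟩⟩
  obtain ⟨hJw, hJu, hJ, hJε⟩ := hJ
  have hfiber : ∀ lam, charShift B.subtype (fun ν => Jbarx (resChar hBA lam - ν))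
      = charShift A.subtype (fun μ => irfVertexTransform A J x (lam - μ)) := fun lam => by
    rw [charShift_resChar hBA]
    exact congrArg _ (funext fun μ => (hJx (lam - μ)).symm)
  refine ⟨fun ν => ?_, fun ν => ?_, fun ν => ?_, fun ν => ?_⟩ <;>
    obtain ⟨lam, rfl⟩ := resChar_surjective hBA ν <;> rw [← hJx lam]
  · exact zeroWeight₂_irfVertexTransform hBA hgl hJw hxw lam
  · exact isUnit_irfVertexTransform hJu hxu lam
  · change J12_3 _ * charShift B.subtype _ = J1_23 _ * J23 _
    rw [hfiber]
    exact irfVertexTransform_cocycle hgl hJw hJ hxu lam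
      (hfiber lam ▸ Commute.one_tmul_charShift (ρ := B.subtype) (hxw lam) _)
  · exact ⟨epsId_irfVertexTransform (fun lam => (hJε lam).1) hxu hxe lam,
      idEps_irfVertexTransform hgl (fun lam => (hJε lam).2) hxu hxe lam⟩
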